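/- (Strong duality, eigenvalue case.) For every symmetric f ∈ ℝ⟨x⟩ of degree at most 2d, sup { λ ∈ ℝ : f − λ ∈ Σ_{2d} } = inf { L(f) : L : ℝ⟨x⟩_{2d} → ℝ linear, L(p*) = L(p) for all p, L(1) = 1, and L(σ) ≥ 0 for all σ ∈ Σ_{2d} }, as an equality in the extended reals. -/

import Mathlib

open scoped Matrix

/-- `ℝ⟨x₁,…,xₙ⟩`: noncommutative polynomials with real coefficients in `n`
noncommuting letters, realized as the monoid algebra of the free monoid on `Fin n`. -/
abbrev NCPoly (n : ℕ) : Type := MonoidAlgebra ℝ (FreeMonoid (Fin n))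

/-- The canonical involution `f ↦ f⋆` on `ℝ⟨x⟩`: it fixes `ℝ` and each letter `xᵢ`
and reverses words. -/
noncomputable def ncStar {n : ℕ} (f : NCPoly n) : NCPoly n :=
  MonoidAlgebra.ofCoeff (Finsupp.mapDomain FreeMonoid.reverse f.coeff)

/-- `degLE f d`: the nc polynomial `f` has degree at most `d`. -/
def degLE {n : ℕ} (f : NCPoly n) (d : ℕ) : Prop :=
  ∀ w ∈ f.coeff.support, FreeMonoid.length w ≤ d

/-- The `i`-th letter `xᵢ` as an nc polynomial. -/
noncomputable def ncX {n : ℕ} (i : Fin n) : NCPoly n :=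
  MonoidAlgebra.of ℝ (FreeMonoid (Fin n)) (FreeMonoid.of i)

/-- A word `w` viewed as an nc polynomial (the monomial `w` with coefficient `1`). -/
noncomputable def ncWord {n : ℕ} (w : FreeMonoid (Fin n)) : NCPoly n :=
  MonoidAlgebra.of ℝ (FreeMonoid (Fin n)) w

/-- Evaluation of an nc polynomial at a tuple `A = (A₁,…,Aₙ)` of square matrices:
the algebra homomorphism `ℝ⟨x⟩ → ℝ^{r×r}` sending `xᵢ` to `Aᵢ`. -/
noncomputable def ncEval {n r : ℕ} (A : Fin n → Matrix (Fin r) (Fin r) ℝ) :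
    NCPoly n →ₐ[ℝ] Matrix (Fin r) (Fin r) ℝ :=
  MonoidAlgebra.lift ℝ _ (FreeMonoid (Fin n)) (FreeMonoid.lift A)

/-- The cone `Σ` of sums of Hermitian squares `Σᵢ gᵢ⋆ gᵢ`. -/
def SOHS (n : ℕ) : Set (NCPoly n) :=
  { f | ∃ (k : ℕ) (g : Fin k → NCPoly n), f = ∑ i, ncStar (g i) * g i }

/-- The truncated cone `Σ_{2d}`: sums of Hermitian squares `Σᵢ gᵢ⋆ gᵢ` with `deg gᵢ ≤ d`. -/
def SOHSdeg (n d : ℕ) : Set (NCPoly n) :=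
  { f | ∃ (k : ℕ) (g : Fin k → NCPoly n), (∀ i, degLE (g i) d) ∧ f = ∑ i, ncStar (g i) * g i }

/-- `f ∼cyc g`: `f - g` is a finite sum of commutators. -/
def cycEq {n : ℕ} (f g : NCPoly n) : Prop :=
  ∃ (k : ℕ) (p q : Fin k → NCPoly n), f - g = ∑ i, (p i * q i - q i * p i)

/-- `Θ`: nc polynomials cyclically equivalent to a sum of Hermitian squares. -/
def Theta (n : ℕ) : Set (NCPoly n) :=
  { f | ∃ σ ∈ SOHS n, cycEq f σ }

/-- The quadratic module `Q(𝔤)` generated by a finite set `G` of nc polynomials: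
all finite sums `Σᵢ pᵢ⋆ gᵢ pᵢ` with `gᵢ ∈ G ∪ {1}`. -/
def QModule {n : ℕ} (G : Finset (NCPoly n)) : Set (NCPoly n) :=
  { f | ∃ (k : ℕ) (g p : Fin k → NCPoly n),
      (∀ i, g i ∈ (G : Set (NCPoly n)) ∪ {1}) ∧ f = ∑ i, ncStar (p i) * g i * p i }

/-- Words of degree (length) at most `d` in `n` letters. -/
def WordLE (n d : ℕ) : Type := { w : FreeMonoid (Fin n) // FreeMonoid.length w ≤ d }

noncomputable instance (n d : ℕ) : Fintype (WordLE n d) := by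
  have h : {l : List (Fin n) | l.length ≤ d}.Finite := List.finite_length_le (Fin n) d
  have : Finite (WordLE n d) := h.to_subtype
  exact Fintype.ofFinite _

instance (n d : ℕ) : DecidableEq (WordLE n d) := by
  unfold WordLE FreeMonoid; exact inferInstance

/-!
Weak duality is immediate: if `f - λ ∈ Σ_{2d}` and `L` is admissible then `L f - λ ≥ 0`.

For the converse, `Σ_{2d}` is the image of the cone of positive semidefinite Gram matrices
indexed by words of length `≤ d`, under `G ↦ Σ G u v · u⋆ v`. A Gram matrix representing `0`
vanishes (look at a longest word with a nonzero diagonal entry), so this map is injective on the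
cone and its image is closed in the finite-dimensional coefficient space of `ℝ⟨x⟩_{2d}`. If `λ`
lay strictly between the supremum and the infimum, then `f - λ ∉ Σ_{2d}` and Farkas' lemma gives
a functional nonnegative on `Σ_{2d}` and negative at `f - λ`; symmetrizing it, adding a small
multiple of the constant-coefficient functional and normalizing gives an admissible `L` with
`L f < λ`.
-/

open scoped ComplexOrder in
lemma Matrix.PosSemidef.apply_eq_zero_of_diag_eq_zero {ι 𝕜 : Type*} [Fintype ι] [RCLike 𝕜]
    {A : Matrix ι ι 𝕜} (hA : A.PosSemidef) {i : ι} (hi : A i i = 0) (j : ι) : A j i = 0 := by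
  classical
  have hcol := (hA.dotProduct_mulVec_zero_iff (Pi.single i 1)).1 (by simp [hi])
  simpa using congrFun hcol j

lemma FreeMonoid.reverse_involutive {α : Type*} :
    Function.Involutive (FreeMonoid.reverse : FreeMonoid α → FreeMonoid α) :=
  fun _ => FreeMonoid.reverse_reverse

lemma FreeMonoid.eq_and_eq_of_reverse_mul_eq {α : Type*} {a b c e : FreeMonoid α}
    (h : a.reverse * b = c.reverse * e) (hl : a.length = c.length) : a = c ∧ b = e := by
  have hl' : a.reverse.toList.length = c.reverse.toList.length := by
    change a.reverse.length = c.reverse.length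
    rw [FreeMonoid.length_reverse, FreeMonoid.length_reverse, hl]
  obtain ⟨h₁, h₂⟩ := List.append_inj h hl'
  exact ⟨FreeMonoid.reverse_involutive.injective (FreeMonoid.toList.injective h₁), h₂⟩

lemma Matrix.isClosed_setOf_posSemidef (ι : Type*) [Fintype ι] :
    IsClosed {A : Matrix ι ι ℝ | A.PosSemidef} := by
  simp_rw [Matrix.posSemidef_iff_dotProduct_mulVec, Set.ofPred_and, Set.ofPred_forall]
  refine .inter (isClosed_eq (by fun_prop) continuous_id) (isClosed_iInter fun x => ?_)
  exact isClosed_le continuous_const (continuous_const.dotProduct (continuous_id.matrix_mulVec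
    continuous_const))

section ClosedImage

variable {D E : Type*} [NormedAddCommGroup D] [NormedSpace ℝ D] [FiniteDimensional ℝ D]
  [NormedAddCommGroup E] [NormedSpace ℝ E] (T : D →ₗ[ℝ] E) {P : Set D}

lemma LinearMap.exists_pos_mul_norm_le_norm_of_cone (hP : IsClosed P)
    (hsmul : ∀ c : ℝ, 0 ≤ c → ∀ x ∈ P, c • x ∈ P) (hker : ∀ x ∈ P, T x = 0 → x = 0) :
    ∃ ε > 0, ∀ x ∈ P, ε * ‖x‖ ≤ ‖T x‖ := by
  have hS : IsCompact (P ∩ Metric.sphere 0 1) := (isCompact_sphere 0 1).inter_left hP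
  obtain ⟨ε, hε, hbound⟩ := hS.exists_forall_le' T.continuous_of_finiteDimensional.norm.continuousOn
    (a := 0) fun x hx => norm_pos_iff.2 fun h =>
      Metric.ne_of_mem_sphere hx.2 one_ne_zero (hker x hx.1 h)
  refine ⟨ε, hε, fun x hx => ?_⟩
  rcases eq_or_ne x 0 with rfl | hx0
  · simp
  have hx' := hbound (‖x‖⁻¹ • x) ⟨hsmul _ (by positivity) x hx, by simp [norm_smul, hx0]⟩
  rw [map_smul, norm_smul, norm_inv, norm_norm, inv_mul_eq_div, le_div_iff₀ (by positivity)] at hx'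
  exact hx'

lemma LinearMap.isClosed_image_of_cone (hP : IsClosed P)
    (hsmul : ∀ c : ℝ, 0 ≤ c → ∀ x ∈ P, c • x ∈ P) (hker : ∀ x ∈ P, T x = 0 → x = 0) :
    IsClosed (T '' P) := by
  obtain ⟨ε, hε, hbound⟩ := T.exists_pos_mul_norm_le_norm_of_cone hP hsmul hker
  refine isClosed_of_closure_subset fun y hy => ?_
  -- Near `y`, the image of `P` is the image of a compact piece of `P`.
  have hK : IsCompact (P ∩ Metric.closedBall 0 ((‖y‖ + 1) / ε)) :=
    (isCompact_closedBall _ _).inter_left hP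
  have hloc : Metric.ball y 1 ∩ T '' P ⊆ T '' (P ∩ Metric.closedBall 0 ((‖y‖ + 1) / ε)) := by
    rintro _ ⟨hz, x, hx, rfl⟩
    refine ⟨x, ⟨hx, ?_⟩, rfl⟩
    rw [mem_closedBall_zero_iff, le_div_iff₀ hε]
    have := norm_le_norm_add_norm_sub' (T x) y
    rw [Metric.mem_ball, dist_eq_norm] at hz
    linarith [hbound x hx]
  have hy' := (hK.image T.continuous_of_finiteDimensional).isClosed.closure_subset_iff.2 hloc
    (Metric.isOpen_ball.inter_closure ⟨Metric.mem_ball_self one_pos, hy⟩)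
  exact Set.image_mono Set.inter_subset_left hy'

end ClosedImage

namespace NCPoly

noncomputable section

variable {n d : ℕ}

def starL (n : ℕ) : NCPoly n →ₗ[ℝ] NCPoly n :=
  MonoidAlgebra.mapDomainLinearMap ℝ ℝ FreeMonoid.reverse

@[simp] lemma starL_apply (p : NCPoly n) : starL n p = ncStar p := rfl

lemma ncStar_single (w : FreeMonoid (Fin n)) (a : ℝ) :
    ncStar (MonoidAlgebra.single w a : NCPoly n) = MonoidAlgebra.single w.reverse a :=
  MonoidAlgebra.mapDomainLinearMap_single (R := ℝ) _ _ _

lemma coeff_ncStar (p : NCPoly n) (w : FreeMonoid (Fin n)) :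
    (ncStar p).coeff w = p.coeff w.reverse := by
  conv_lhs => rw [← FreeMonoid.reverse_involutive w]
  exact Finsupp.mapDomain_apply FreeMonoid.reverse_involutive.injective _ _

lemma coeff_one_ncStar (p : NCPoly n) : (ncStar p).coeff 1 = p.coeff 1 :=
  coeff_ncStar p 1

lemma ncStar_ncStar (p : NCPoly n) : ncStar (ncStar p) = p := by
  ext w
  rw [coeff_ncStar, coeff_ncStar, FreeMonoid.reverse_reverse]

lemma ncStar_one : ncStar (1 : NCPoly n) = 1 :=
  ncStar_single 1 1

def degLESubmodule (n d : ℕ) : Submodule ℝ (NCPoly n) :=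
  MonoidAlgebra.supported ℝ ℝ {w | FreeMonoid.length w ≤ d}

lemma degLE_single {w : FreeMonoid (Fin n)} (hw : FreeMonoid.length w ≤ d) (a : ℝ) :
    degLE (MonoidAlgebra.single w a : NCPoly n) d := by
  intro t ht
  rw [MonoidAlgebra.coeff_single] at ht
  rw [Finset.mem_singleton.1 (Finsupp.support_single_subset ht)]
  exact hw

lemma degLE_one : degLE (1 : NCPoly n) d :=
  degLE_single (Nat.zero_le d) 1

def coeffs (n d : ℕ) : NCPoly n →ₗ[ℝ] (WordLE n d → ℝ) where
  toFun p w := p.coeff w.1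
  map_add' _ _ := rfl
  map_smul' _ _ := rfl

lemma coeffs_injOn : Set.InjOn (coeffs n d) (degLESubmodule n d) := by
  intro p hp q hq h
  ext t
  by_cases ht : FreeMonoid.length t ≤ d
  · exact congrFun h ⟨t, ht⟩
  · rw [MonoidAlgebra.mem_supported'.1 hp t ht, MonoidAlgebra.mem_supported'.1 hq t ht]

def ofCoeffs (c : WordLE n d → ℝ) : NCPoly n :=
  ∑ w, MonoidAlgebra.single w.1 (c w)

lemma degLE_ofCoeffs (c : WordLE n d → ℝ) : degLE (ofCoeffs c) d :=
  (degLESubmodule n d).sum_mem fun w _ => degLE_single w.2 _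

lemma coeffs_ofCoeffs (c : WordLE n d → ℝ) : coeffs n d (ofCoeffs c) = c := by
  funext w
  change (ofCoeffs c).coeff w.1 = c w
  rw [ofCoeffs, MonoidAlgebra.coeff_sum, Finsupp.finsetSum_apply,
    Finset.sum_eq_single_of_mem w (Finset.mem_univ w)]
  · simp
  · intro v _ hvw
    simp [Subtype.val_injective.ne hvw]

lemma ofCoeffs_coeffs {p : NCPoly n} (hp : degLE p d) : ofCoeffs (coeffs n d p) = p :=
  coeffs_injOn (degLE_ofCoeffs _) hp (coeffs_ofCoeffs _)

def gram (n d : ℕ) : Matrix (WordLE n d) (WordLE n d) ℝ →ₗ[ℝ] NCPoly n :=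
  ∑ u, ∑ v, MonoidAlgebra.lsingle (u.1.reverse * v.1) ∘ₗ Matrix.entryLinearMap ℝ ℝ u v

lemma gram_apply (G : Matrix (WordLE n d) (WordLE n d) ℝ) :
    gram n d G = ∑ u, ∑ v, MonoidAlgebra.single (u.1.reverse * v.1) (G u v) := by
  simp [gram]

open scoped Classical in
lemma coeff_gram (G : Matrix (WordLE n d) (WordLE n d) ℝ) (t : FreeMonoid (Fin n)) :
    (gram n d G).coeff t = ∑ u, ∑ v, if u.1.reverse * v.1 = t then G u v else 0 := by
  simp [gram_apply, MonoidAlgebra.coeff_sum, Finsupp.single_apply]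

lemma ncStar_ofCoeffs_mul_ofCoeffs (c c' : WordLE n d → ℝ) :
    ncStar (ofCoeffs c) * ofCoeffs c' = gram n d (Matrix.vecMulVec c c') := by
  rw [ofCoeffs, ← starL_apply, map_sum, ofCoeffs, Finset.sum_mul_sum, gram_apply]
  simp [ncStar_single, Matrix.vecMulVec_apply]

lemma ncStar_gram (G : Matrix (WordLE n d) (WordLE n d) ℝ) :
    ncStar (gram n d G) = gram n d Gᵀ := by
  rw [← starL_apply, gram_apply, gram_apply, Finset.sum_comm]
  simp [ncStar_single, FreeMonoid.reverse_mul, FreeMonoid.reverse_reverse]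

lemma degLE_gram (G : Matrix (WordLE n d) (WordLE n d) ℝ) : degLE (gram n d G) (2 * d) := by
  rw [gram_apply]
  refine (degLESubmodule n _).sum_mem fun u _ => (degLESubmodule n _).sum_mem fun v _ =>
    degLE_single ?_ _
  rw [FreeMonoid.length_mul, FreeMonoid.length_reverse, two_mul]
  exact Nat.add_le_add u.2 v.2

lemma mem_SOHSdeg_iff {σ : NCPoly n} :
    σ ∈ SOHSdeg n d ↔ ∃ G : Matrix (WordLE n d) (WordLE n d) ℝ, G.PosSemidef ∧ gram n d G = σ := by
  constructor
  · rintro ⟨k, g, hg, rfl⟩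
    refine ⟨∑ i, Matrix.vecMulVec (coeffs n d (g i)) (coeffs n d (g i)),
      Matrix.posSemidef_sum _ fun i _ => ?_, ?_⟩
    · simpa using Matrix.posSemidef_vecMulVec_self_star (coeffs n d (g i))
    · simp_rw [map_sum, ← ncStar_ofCoeffs_mul_ofCoeffs, ofCoeffs_coeffs (hg _)]
  · rintro ⟨G, hG, rfl⟩
    obtain ⟨m, v, rfl⟩ := Matrix.posSemidef_iff_eq_sum_vecMulVec.1 hG
    refine ⟨m, fun j => ofCoeffs (v j), fun j => degLE_ofCoeffs _, ?_⟩
    simp [map_sum, ncStar_ofCoeffs_mul_ofCoeffs]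

lemma coeff_gram_reverse_mul {G : Matrix (WordLE n d) (WordLE n d) ℝ} {u v : WordLE n d}
    (h : ∀ a b, a.1.reverse * b.1 = u.1.reverse * v.1 → G a b ≠ 0 → a = u ∧ b = v) :
    (gram n d G).coeff (u.1.reverse * v.1) = G u v := by
  classical
  rw [coeff_gram, ← Fintype.sum_prod_type', Finset.sum_eq_single_of_mem (u, v) (Finset.mem_univ _)]
  · simp
  · rintro ⟨a, b⟩ - hab
    split_ifs with hw
    · by_contra hne
      obtain ⟨rfl, rfl⟩ := h a b hw hne
      exact hab rfl
    · rfl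

lemma eq_zero_of_gram_eq_zero {G : Matrix (WordLE n d) (WordLE n d) ℝ} (hG : G.PosSemidef)
    (h : gram n d G = 0) : G = 0 := by
  classical
  suffices hdiag : ∀ u, G u u = 0 by
    refine Matrix.ext fun a b => ?_
    simpa [Matrix.PosSemidef.apply_eq_zero_of_diag_eq_zero hG (hdiag a) b] using
      (hG.1.apply a b).symm
  by_contra! ⟨u₀, hu₀⟩
  obtain ⟨u, hu, hmax⟩ := Finset.exists_max_image {u | G u u ≠ 0} (fun u => u.1.length)
    ⟨u₀, by simpa using hu₀⟩
  -- Words longer than `u` index zero rows and columns of `G`, so only `(u, u)` contributes.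
  have hlong : ∀ a : WordLE n d, u.1.length < a.1.length → ∀ b, G a b = 0 ∧ G b a = 0 := by
    intro a ha b
    have haa : G a a = 0 := by
      by_contra hne
      exact (hmax a (by simpa using hne)).not_gt ha
    have hba := Matrix.PosSemidef.apply_eq_zero_of_diag_eq_zero hG haa b
    exact ⟨by simpa [hba] using (hG.1.apply a b).symm, hba⟩
  refine (Finset.mem_filter.1 hu).2 ?_
  rw [← coeff_gram_reverse_mul (G := G) (u := u) (v := u), h]
  · rfl
  intro a b hab hne
  have hlen := congrArg FreeMonoid.length hab
  simp only [FreeMonoid.length_mul, FreeMonoid.length_reverse] at hlen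
  rcases lt_trichotomy a.1.length u.1.length with hlt | heq | hgt
  · exact absurd (hlong b (by omega) a).2 hne
  · obtain ⟨ha, hb⟩ := FreeMonoid.eq_and_eq_of_reverse_mul_eq hab heq
    exact ⟨Subtype.ext ha, Subtype.ext hb⟩
  · exact absurd (hlong a hgt b).1 hne

lemma ncStar_of_mem_SOHSdeg {σ : NCPoly n} (hσ : σ ∈ SOHSdeg n d) : ncStar σ = σ := by
  obtain ⟨G, hG, rfl⟩ := mem_SOHSdeg_iff.1 hσ
  rw [ncStar_gram, ← Matrix.conjTranspose_eq_transpose_of_trivial, hG.1]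

lemma degLE_of_mem_SOHSdeg {σ : NCPoly n} (hσ : σ ∈ SOHSdeg n d) : degLE σ (2 * d) := by
  obtain ⟨G, -, rfl⟩ := mem_SOHSdeg_iff.1 hσ
  exact degLE_gram G

lemma one_mem_SOHSdeg : (1 : NCPoly n) ∈ SOHSdeg n d :=
  ⟨1, fun _ => 1, fun _ => degLE_one, by simp [ncStar_one]⟩

lemma coeff_one_nonneg_of_mem_SOHSdeg {σ : NCPoly n} (hσ : σ ∈ SOHSdeg n d) :
    0 ≤ σ.coeff 1 := by
  obtain ⟨G, hG, rfl⟩ := mem_SOHSdeg_iff.1 hσ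
  have h1 : FreeMonoid.length (1 : FreeMonoid (Fin n)) ≤ d := Nat.zero_le d
  have hcoeff := coeff_gram_reverse_mul (G := G) (u := ⟨1, h1⟩) (v := ⟨1, h1⟩) fun a b hab _ => by
    have hlen := congrArg FreeMonoid.length hab
    simp only [FreeMonoid.length_mul, FreeMonoid.length_reverse, FreeMonoid.length_one] at hlen
    exact ⟨Subtype.ext (FreeMonoid.length_eq_zero.1 (by omega)),
      Subtype.ext (FreeMonoid.length_eq_zero.1 (by omega))⟩
  exact hcoeff ▸ hG.diag_nonneg

def sohsCone (n d : ℕ) : PointedCone ℝ (NCPoly n) where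
  carrier := SOHSdeg n d
  add_mem' := by
    rintro _ _ hσ hτ
    obtain ⟨G, hG, rfl⟩ := mem_SOHSdeg_iff.1 hσ
    obtain ⟨H, hH, rfl⟩ := mem_SOHSdeg_iff.1 hτ
    exact mem_SOHSdeg_iff.2 ⟨G + H, hG.add hH, map_add _ _ _⟩
  zero_mem' := mem_SOHSdeg_iff.2 ⟨0, .zero, map_zero _⟩
  smul_mem' := by
    rintro c _ hσ
    obtain ⟨G, hG, rfl⟩ := mem_SOHSdeg_iff.1 hσ
    exact mem_SOHSdeg_iff.2 ⟨(c : ℝ) • G, hG.smul c.2, map_smul _ _ _⟩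

lemma isClosed_coeffs_image_SOHSdeg : IsClosed (coeffs n (2 * d) '' SOHSdeg n d) := by
  let _ := Matrix.normedAddCommGroup (m := WordLE n d) (n := WordLE n d) (α := ℝ)
  let _ := Matrix.normedSpace (m := WordLE n d) (n := WordLE n d) (α := ℝ) (R := ℝ)
  have himage : coeffs n (2 * d) '' SOHSdeg n d =
      (coeffs n (2 * d) ∘ₗ gram n d) '' {G | G.PosSemidef} := by
    ext x
    simp [mem_SOHSdeg_iff]
  rw [himage]
  refine LinearMap.isClosed_image_of_cone _ (Matrix.isClosed_setOf_posSemidef _)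
    (fun c hc G hG => hG.smul hc) fun G hG h => eq_zero_of_gram_eq_zero hG ?_
  exact coeffs_injOn (degLE_gram G) (zero_mem _) (h.trans (map_zero _).symm)

def coeffCone (n d : ℕ) : ProperCone ℝ (WordLE n (2 * d) → ℝ) where
  toSubmodule := (sohsCone n d).map (coeffs n (2 * d))
  isClosed' := isClosed_coeffs_image_SOHSdeg

lemma exists_nonneg_on_SOHSdeg_neg {g : NCPoly n} (hg : degLE g (2 * d))
    (hgσ : g ∉ SOHSdeg n d) :
    ∃ L : NCPoly n →ₗ[ℝ] ℝ, (∀ σ ∈ SOHSdeg n d, 0 ≤ L σ) ∧ L g < 0 := by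
  have hnot : coeffs n (2 * d) g ∉ coeffCone n d := by
    rintro ⟨σ, hσ, hσg⟩
    exact hgσ (coeffs_injOn (degLE_of_mem_SOHSdeg hσ) hg hσg ▸ hσ)
  obtain ⟨f, hf, hfg⟩ := (coeffCone n d).hyperplane_separation_point hnot
  exact ⟨f.toLinearMap ∘ₗ coeffs n (2 * d), fun σ hσ => hf _ ⟨σ, hσ, rfl⟩, hfg⟩

def symmPart (L : NCPoly n →ₗ[ℝ] ℝ) : NCPoly n →ₗ[ℝ] ℝ :=
  (2⁻¹ : ℝ) • (L + L ∘ₗ starL n)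

lemma symmPart_apply (L : NCPoly n →ₗ[ℝ] ℝ) (p : NCPoly n) :
    symmPart L p = (L p + L (ncStar p)) / 2 := by
  simp only [symmPart, LinearMap.smul_apply, LinearMap.add_apply, LinearMap.comp_apply,
    starL_apply, smul_eq_mul]
  ring

lemma symmPart_ncStar (L : NCPoly n →ₗ[ℝ] ℝ) (p : NCPoly n) :
    symmPart L (ncStar p) = symmPart L p := by
  rw [symmPart_apply, symmPart_apply, ncStar_ncStar, add_comm]

lemma symmPart_of_ncStar_eq (L : NCPoly n →ₗ[ℝ] ℝ) {p : NCPoly n} (hp : ncStar p = p) :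
    symmPart L p = L p := by
  rw [symmPart_apply, hp, add_self_div_two]

def coeffOne (n : ℕ) : NCPoly n →ₗ[ℝ] ℝ :=
  Finsupp.lapply 1 ∘ₗ (MonoidAlgebra.coeffLinearEquiv ℝ).toLinearMap

@[simp] lemma coeffOne_apply (p : NCPoly n) : coeffOne n p = p.coeff 1 := rfl

lemma apply_sub_smul_one {L : NCPoly n →ₗ[ℝ] ℝ} (hL1 : L 1 = 1) (f : NCPoly n) (lam : ℝ) :
    L (f - lam • 1) = L f - lam := by
  rw [map_sub, map_smul, hL1, smul_eq_mul, mul_one]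

lemma exists_state_neg {g : NCPoly n} (hgs : ncStar g = g) (hg : degLE g (2 * d))
    (hgσ : g ∉ SOHSdeg n d) :
    ∃ L : NCPoly n →ₗ[ℝ] ℝ, (∀ p, L (ncStar p) = L p) ∧ L 1 = 1 ∧
      (∀ σ ∈ SOHSdeg n d, 0 ≤ L σ) ∧ L g < 0 := by
  obtain ⟨L₀, hL₀, hL₀g⟩ := exists_nonneg_on_SOHSdeg_neg hg hgσ
  -- The separating functional may vanish at `1`; a small multiple of `coeffOne` repairs this.
  obtain ⟨t, ht, htg⟩ := exists_pos_mul_lt (neg_pos.2 hL₀g) (g.coeff 1)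
  set L := symmPart L₀ + t • coeffOne n
  have hL : ∀ p, L p = symmPart L₀ p + t * p.coeff 1 := fun p => rfl
  have hLpos : ∀ σ ∈ SOHSdeg n d, 0 ≤ L σ := fun σ hσ => by
    rw [hL, symmPart_of_ncStar_eq _ (ncStar_of_mem_SOHSdeg hσ)]
    have := coeff_one_nonneg_of_mem_SOHSdeg hσ
    have := hL₀ σ hσ
    positivity
  have hL1 : 0 < L 1 := by
    have hcoeff : (1 : NCPoly n).coeff 1 = 1 := Finsupp.single_eq_same
    rw [hL, symmPart_of_ncStar_eq _ ncStar_one, hcoeff, mul_one]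
    linarith [hL₀ 1 one_mem_SOHSdeg]
  refine ⟨(L 1)⁻¹ • L, fun p => ?_, inv_mul_cancel₀ hL1.ne', fun σ hσ => ?_, ?_⟩
  · simp [hL, symmPart_ncStar, coeff_one_ncStar]
  · exact mul_nonneg (inv_nonneg.2 hL1.le) (hLpos σ hσ)
  · refine mul_neg_of_pos_of_neg (inv_pos.2 hL1) ?_
    rw [hL, symmPart_of_ncStar_eq _ hgs]
    linarith [mul_comm t (g.coeff 1)]

end

end NCPoly

open NCPoly in
/-- **strong duality, eigenvalue case.** For symmetric `f` of degree at
most `2d`, `sup { λ : f - λ ∈ Σ_{2d} }` equals the infimum of `L(f)` over symmetric unital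
linear functionals `L` on `ℝ⟨x⟩_{2d}` that are nonnegative on `Σ_{2d}`. -/
theorem strong_duality_eigenvalue {n d : ℕ} (f : NCPoly n)
    (hf : ncStar f = f) (hdeg : degLE f (2 * d)) :
    sSup { x : EReal | ∃ lam : ℝ, f - lam • 1 ∈ SOHSdeg n d ∧ x = (lam : EReal) } =
    sInf { x : EReal | ∃ L : NCPoly n →ₗ[ℝ] ℝ,
        (∀ p : NCPoly n, degLE p (2 * d) → L (ncStar p) = L p) ∧
        L 1 = 1 ∧
        (∀ σ ∈ SOHSdeg n d, 0 ≤ L σ) ∧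
        x = (L f : EReal) } := by
  refine le_antisymm (sSup_le ?_) ?_
  · rintro _ ⟨lam, hlam, rfl⟩
    refine le_sInf ?_
    rintro _ ⟨L, -, hL1, hLpos, rfl⟩
    have := hLpos _ hlam
    rw [apply_sub_smul_one hL1, sub_nonneg] at this
    exact EReal.coe_le_coe_iff.2 this
  by_contra! hlt
  obtain ⟨lam, hsup, hinf⟩ := EReal.exists_between_coe_real hlt
  have hnot : f - lam • 1 ∉ SOHSdeg n d := fun h => hsup.not_ge (le_sSup ⟨lam, h, rfl⟩)
  have hgs : ncStar (f - lam • 1) = f - lam • 1 := by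
    rw [← NCPoly.starL_apply, map_sub, map_smul]
    simp [hf, ncStar_one]
  have hgdeg : degLE (f - lam • 1) (2 * d) :=
    (degLESubmodule n _).sub_mem hdeg ((degLESubmodule n _).smul_mem _ degLE_one)
  obtain ⟨L, hLs, hL1, hLpos, hLg⟩ := exists_state_neg hgs hgdeg hnot
  rw [apply_sub_smul_one hL1, sub_neg] at hLg
  refine hinf.not_ge ((sInf_le ?_).trans (EReal.coe_le_coe_iff.2 hLg.le))
  exact ⟨L, fun p _ => hLs p, hL1, hLpos, rfl⟩
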